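/- arXiv:2504.08188 — 2 statements merged into one kernel-verified Lean document; each statement's English description precedes it below -/
import Mathlib

section
/- (Robust constraint satisfaction, Theorem 2.) Let h : ℝ^n → ℝ be Lipschitz with constant η ≥ 0, let ε ≥ 0 (the total uncertainty bound, ε = ε_w + ε_s + ε_c), and let 0 < γ ≤ 1. Let x, x̂ : ℕ → ℝ^n be the real and nominal trajectories satisfying: (i) ‖x(k) − x̂(k)‖ ≤ ε for all k ∈ ℕ; (ii) the robust safety constraint h(x̂(k+1)) ≤ (1−γ)·h(x̂(k)) − γ·η·ε for all k ∈ ℕ; and (iii) the initial condition h(x̂(0)) + η·ε ≤ 0. Then h(x̂(k)) + η·ε ≤ 0 and h(x(k)) ≤ 0 for all k ∈ ℕ, i.e., the safe set S = {x : h(x) ≤ 0} is forward invariant for the real trajectory despite the model uncertainties. -/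
/-- Theorem 2 (Robust constraint satisfaction): under the robust safety constraint on the
nominal trajectory `xhat`, the safe set `S = {x | h x ≤ 0}` is forward invariant for the
real trajectory `x` despite model uncertainties bounded by `ε = ε_w + ε_s + ε_c`. -/
theorem rcbf_robust_forward_invariance
    {n : ℕ} (h : EuclideanSpace ℝ (Fin n) → ℝ) (η ε γ : ℝ)
    (hη : 0 ≤ η) (hε : 0 ≤ ε) (hγ0 : 0 < γ) (hγ1 : γ ≤ 1)
    (hLip : ∀ x xhat : EuclideanSpace ℝ (Fin n), |h x - h xhat| ≤ η * ‖x - xhat‖)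
    (x xhat : ℕ → EuclideanSpace ℝ (Fin n))
    (hclose : ∀ k : ℕ, ‖x k - xhat k‖ ≤ ε)
    (hrcbf : ∀ k : ℕ, h (xhat (k + 1)) ≤ (1 - γ) * h (xhat k) - γ * η * ε)
    (hinit : h (xhat 0) + η * ε ≤ 0) :
    ∀ k : ℕ, h (xhat k) + η * ε ≤ 0 ∧ h (x k) ≤ 0 := by
  have key : ∀ k : ℕ, h (xhat k) + η * ε ≤ 0 := by
    intro k
    induction k with
    | zero => exact hinit
    | succ k ih =>
      have h1 := hrcbf k
      nlinarith [mul_nonneg hη hε]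
  intro k
  refine ⟨key k, ?_⟩
  have h2 : h (x k) - h (xhat k) ≤ η * ε := by
    calc h (x k) - h (xhat k) ≤ |h (x k) - h (xhat k)| := le_abs_self _
    _ ≤ η * ‖x k - xhat k‖ := hLip _ _
    _ ≤ η * ε := by gcongr; exact hclose k
  linarith [key k]
end

section
/- (Theorem 1, part i: disturbance-free convergence.) Let 0 < μ ≤ Λ and 0 < r < 2μ/Λ². Let H₂ : ℕ → ℝ^{q×q} be a sequence of symmetric positive-definite matrices with λ_min(H₂(k)) ≥ μ and λ_max(H₂(k)) ≤ Λ for all k, and let the parameter error Φ̃ : ℕ → ℝ^{n×q} obey the disturbance-free concurrent-learning error dynamics Φ̃(k+1) = Φ̃(k)·(I_q − r·H₂(k)). Then ‖Φ̃(k)‖_F → 0 as k → ∞; consequently, for any regressor sequence ζ̄ : ℕ → ℝ^q with ‖ζ̄(k)‖ ≤ 1 for all k, the identification error e_si(k) = Φ̃(k)ζ̄(k) converges to zero. -/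
/-!
In an orthonormal eigenbasis of `H₂(k)` the matrix `I - r • H₂(k)` acts by the factors
`1 - r λᵢ`, and `λᵢ ∈ [μ, Λ]` gives `(1 - r λᵢ)² ≤ 1 - 2 r μ + r² Λ²`, which is `< 1` exactly
because `r < 2μ / Λ²`. So multiplication by `I - r • H₂(k)` contracts the Frobenius norm by a
fixed factor `c < 1`, whence `‖Φ̃(k)‖_F ≤ cᵏ ‖Φ̃(0)‖_F`, and `‖Φ̃(k) ζ̄(k)‖ ≤ ‖Φ̃(k)‖_F ‖ζ̄(k)‖`.
-/

open scoped Matrix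

attribute [local instance] Matrix.frobeniusNormedAddCommGroup

open Filter Topology WithLp

lemma OrthonormalBasis.norm_le_mul_of_norm_inner_le {ι 𝕜 E : Type*} [Fintype ι] [RCLike 𝕜]
    [NormedAddCommGroup E] [InnerProductSpace 𝕜 E] (b : OrthonormalBasis ι 𝕜 E) {x y : E}
    {c : ℝ} (hc : 0 ≤ c) (h : ∀ i, ‖inner 𝕜 (b i) y‖ ≤ c * ‖inner 𝕜 (b i) x‖) :
    ‖y‖ ≤ c * ‖x‖ := by
  refine (pow_le_pow_iff_left₀ (norm_nonneg y) (by positivity) two_ne_zero).mp ?_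
  rw [mul_pow, ← b.sum_sq_norm_inner_right, ← b.sum_sq_norm_inner_right, Finset.mul_sum]
  gcongr with i
  rw [← mul_pow]
  exact pow_le_pow_left₀ (norm_nonneg _) (h i) 2

namespace Matrix

variable {𝕜 l m n : Type*} [RCLike 𝕜] [Fintype l] [Fintype m] [Fintype n]

lemma frobenius_norm_sq_eq_sum_norm_sq_row (A : Matrix m n 𝕜) :
    ‖A‖ ^ 2 = ∑ i, ‖toLp 2 (A i)‖ ^ 2 :=
  PiLp.norm_sq_eq_of_L2 _ (toLp 2 fun i => toLp 2 (A i))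

lemma frobenius_norm_mulVec (A : Matrix m n 𝕜) (v : n → 𝕜) :
    ‖toLp 2 (A *ᵥ v)‖ ≤ ‖A‖ * ‖toLp 2 v‖ := by
  rw [← frobenius_norm_replicateCol (ι := Unit), ← frobenius_norm_replicateCol (ι := Unit),
    replicateCol_mulVec]
  exact frobenius_norm_mul _ _

lemma frobenius_norm_mul_le_of_mulVec {A : Matrix l m 𝕜} {c : ℝ} (hc : 0 ≤ c)
    (hA : ∀ v, ‖toLp 2 (A *ᵥ v)‖ ≤ c * ‖toLp 2 v‖) (X : Matrix m n 𝕜) :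
    ‖A * X‖ ≤ c * ‖X‖ := by
  rw [← frobenius_norm_transpose, ← frobenius_norm_transpose X]
  refine (pow_le_pow_iff_left₀ (norm_nonneg _) (by positivity) two_ne_zero).mp ?_
  rw [mul_pow, frobenius_norm_sq_eq_sum_norm_sq_row, frobenius_norm_sq_eq_sum_norm_sq_row,
    Finset.mul_sum]
  gcongr with j
  rw [← mul_pow]
  exact pow_le_pow_left₀ (norm_nonneg _) (hA (Xᵀ j)) 2

variable [DecidableEq n] {A : Matrix n n 𝕜}

lemma IsHermitian.inner_eigenvectorBasis_mulVec (hA : A.IsHermitian) (i : n) (v : n → 𝕜) :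
    inner 𝕜 (hA.eigenvectorBasis i) (toLp 2 (A *ᵥ v)) =
      hA.eigenvalues i * inner 𝕜 (hA.eigenvectorBasis i) (toLp 2 v) := by
  have hsymm := isSymmetric_toEuclideanLin_iff.mpr hA (hA.eigenvectorBasis i) (toLp 2 v)
  have heig : toEuclideanLin A (hA.eigenvectorBasis i) =
      hA.eigenvalues i • hA.eigenvectorBasis i :=
    congrArg (toLp 2) (hA.mulVec_eigenvectorBasis i)
  rw [heig, inner_smul_left_eq_smul, RCLike.real_smul_eq_coe_mul] at hsymm
  exact hsymm.symm

lemma IsHermitian.norm_sub_smul_mulVec_le (hA : A.IsHermitian) {r c : ℝ} (hc : 0 ≤ c)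
    (hrc : ∀ i, |1 - r * hA.eigenvalues i| ≤ c) (v : n → 𝕜) :
    ‖toLp 2 ((1 - r • A) *ᵥ v)‖ ≤ c * ‖toLp 2 v‖ := by
  refine hA.eigenvectorBasis.norm_le_mul_of_norm_inner_le hc fun i => ?_
  have hcoord : inner 𝕜 (hA.eigenvectorBasis i) (toLp 2 ((1 - r • A) *ᵥ v)) =
      ((1 - r * hA.eigenvalues i : ℝ) : 𝕜) * inner 𝕜 (hA.eigenvectorBasis i) (toLp 2 v) := by
    rw [sub_mulVec, one_mulVec, smul_mulVec, toLp_sub, toLp_smul, inner_sub_right,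
      inner_smul_right_eq_smul, hA.inner_eigenvectorBasis_mulVec]
    simp only [RCLike.real_smul_eq_coe_mul]
    push_cast
    ring
  rw [hcoord, norm_mul, RCLike.norm_ofReal]
  exact mul_le_mul_of_nonneg_right (hrc i) (norm_nonneg _)

lemma IsHermitian.frobenius_norm_mul_one_sub_smul_le (hA : A.IsHermitian) {r c : ℝ}
    (hc : 0 ≤ c) (hrc : ∀ i, |1 - r * hA.eigenvalues i| ≤ c) (X : Matrix m n 𝕜) :
    ‖X * (1 - r • A)‖ ≤ c * ‖X‖ := by
  have hB : (1 - r • A)ᴴ = 1 - r • A := by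
    rw [conjTranspose_sub, conjTranspose_one, conjTranspose_smul, star_trivial, hA.eq]
  rw [← frobenius_norm_conjTranspose, conjTranspose_mul, hB, ← frobenius_norm_conjTranspose X]
  exact frobenius_norm_mul_le_of_mulVec hc (hA.norm_sub_smul_mulVec_le hc hrc) _

end Matrix

lemma tendsto_zero_of_le_mul_of_lt_one {u : ℕ → ℝ} {c : ℝ} (hc0 : 0 ≤ c) (hc1 : c < 1)
    (hu : ∀ k, 0 ≤ u k) (h : ∀ k, u (k + 1) ≤ c * u k) : Tendsto u atTop (𝓝 0) := by
  refine squeeze_zero hu (fun k => le_geom hc0 k fun j _ => h j) ?_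
  simpa using (tendsto_pow_atTop_nhds_zero_of_lt_one hc0 hc1).mul_const (u 0)

lemma abs_one_sub_mul_le_sqrt {μ Λ r x : ℝ} (hμ : 0 ≤ μ) (hr : 0 ≤ r) (hx : μ ≤ x ∧ x ≤ Λ) :
    |1 - r * x| ≤ √(1 - 2 * r * μ + r ^ 2 * Λ ^ 2) := by
  obtain ⟨hμx, hxΛ⟩ := hx
  refine Real.abs_le_sqrt ?_
  have hsq : x ^ 2 ≤ Λ ^ 2 := pow_le_pow_left₀ (hμ.trans hμx) hxΛ 2
  nlinarith [mul_le_mul_of_nonneg_left hμx hr, mul_le_mul_of_nonneg_left hsq (sq_nonneg r)]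

theorem concurrent_learning_convergence_disturbance_free_general
    {n q : ℕ} (μ Λ r : ℝ) (hμ : 0 < μ) (hμΛ : μ ≤ Λ)
    (hr0 : 0 < r) (hr : r < 2 * μ / Λ ^ 2)
    (H₂ : ℕ → Matrix (Fin q) (Fin q) ℝ)
    (hherm : ∀ k, (H₂ k).IsHermitian)
    (heig : ∀ k i, μ ≤ (hherm k).eigenvalues i ∧ (hherm k).eigenvalues i ≤ Λ)
    (Φtilde : ℕ → Matrix (Fin n) (Fin q) ℝ)
    (hdyn : ∀ k, Φtilde (k + 1) = Φtilde k * (1 - r • H₂ k)) :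
    Filter.Tendsto (fun k => ‖Φtilde k‖) Filter.atTop (nhds 0) ∧
    ∀ ζ : ℕ → EuclideanSpace ℝ (Fin q), (∀ k, ‖ζ k‖ ≤ 1) →
      Filter.Tendsto (fun k => (Φtilde k) *ᵥ (ζ k)) Filter.atTop (nhds 0) := by
  set c := √(1 - 2 * r * μ + r ^ 2 * Λ ^ 2)
  have hc0 : 0 ≤ c := Real.sqrt_nonneg _
  have hc1 : c < 1 := by
    have hΛ : 0 < Λ := hμ.trans_le hμΛ
    have hrΛ : r * Λ ^ 2 < 2 * μ := (lt_div_iff₀ (by positivity)).mp hr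
    exact (Real.sqrt_lt' one_pos).mpr (by nlinarith)
  have hnorm : Tendsto (fun k => ‖Φtilde k‖) atTop (𝓝 0) := by
    refine tendsto_zero_of_le_mul_of_lt_one hc0 hc1 (fun _ => norm_nonneg _) fun k => ?_
    rw [hdyn]
    exact (hherm k).frobenius_norm_mul_one_sub_smul_le hc0
      (fun i => abs_one_sub_mul_le_sqrt hμ.le hr0.le (heig k i)) _
  refine ⟨hnorm, fun ζ hζ => ?_⟩
  have hL2 : Tendsto (fun k => toLp 2 (Φtilde k *ᵥ ζ k)) atTop (𝓝 0) :=
    squeeze_zero_norm (fun k => (Matrix.frobenius_norm_mulVec _ _).trans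
      (mul_le_of_le_one_right (norm_nonneg _) (hζ k))) hnorm
  exact ((PiLp.continuous_ofLp 2 _).tendsto 0).comp hL2

/-- Theorem 1, part i (disturbance-free convergence): if the parameter error obeys
`Φ̃(k+1) = Φ̃(k)·(I − r·H₂(k))` with symmetric positive-definite `H₂(k)` whose
eigenvalues lie in `[μ, Λ]` and `0 < r < 2μ/Λ²`, then the Frobenius norm `‖Φ̃(k)‖_F → 0`;
consequently the identification error `e_si(k) = Φ̃(k)ζ̄(k)` converges to zero for any
regressor sequence with `‖ζ̄(k)‖ ≤ 1`. -/
theorem concurrent_learning_convergence_disturbance_free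
    {n q : ℕ} (μ Λ r : ℝ) (hμ : 0 < μ) (hμΛ : μ ≤ Λ)
    (hr0 : 0 < r) (hr : r < 2 * μ / Λ ^ 2)
    (H₂ : ℕ → Matrix (Fin q) (Fin q) ℝ)
    (hherm : ∀ k, (H₂ k).IsHermitian) (hpos : ∀ k, (H₂ k).PosDef)
    (heig : ∀ k i, μ ≤ (hherm k).eigenvalues i ∧ (hherm k).eigenvalues i ≤ Λ)
    (Φtilde : ℕ → Matrix (Fin n) (Fin q) ℝ)
    (hdyn : ∀ k, Φtilde (k + 1) = Φtilde k * (1 - r • H₂ k)) :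
    Filter.Tendsto (fun k => ‖Φtilde k‖) Filter.atTop (nhds 0) ∧
    ∀ ζ : ℕ → EuclideanSpace ℝ (Fin q), (∀ k, ‖ζ k‖ ≤ 1) →
      Filter.Tendsto (fun k => (Φtilde k) *ᵥ (ζ k)) Filter.atTop (nhds 0) :=
  concurrent_learning_convergence_disturbance_free_general μ Λ r hμ hμΛ hr0 hr H₂ hherm heig Φtilde
    hdyn
end
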